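/- Let K be the fractal k-cube of order n with digit set D and let α ∈ A_k, and suppose D_α := D ∩ (n−1)P_α is nonempty. Then K_α := K ∩ P_α is the fractal k-cube with digit set D_α, i.e., the unique nonempty compact set X with nX = X + D_α. Furthermore, with α^0 ∈ {0,1}^k the vector with entries α^0_i = max(α_i,0), the translate K_α^0 = K_α − α^0 is the fractal k-cube with digit set D^0_α = D_α − (n−1)α^0, and K_α^0 is the orthogonal projection of K_α onto E_α = span{e_i : α_i = 0}. -/

import Mathlib

open Set Pointwise MeasureTheory

noncomputable section

/-- Points of `ℝ^k`. -/
abbrev Pt (k : ℕ) := Fin k → ℝ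

/-- A vector with all coordinates in `{0, 1, …, n−1}`. -/
def IsDigit (n : ℕ) {k : ℕ} (d : Pt k) : Prop :=
  ∀ i, ∃ m : ℕ, m < n ∧ d i = (m : ℝ)

/-- A digit set: a nonempty subset of `{0, 1, …, n−1}^k`. -/
def IsDigitSet (n : ℕ) {k : ℕ} (D : Set (Pt k)) : Prop :=
  D.Nonempty ∧ ∀ d ∈ D, IsDigit n d

/-- `K` is the fractal `k`-cube of order `n` with digit set `D`:
a nonempty compact set with `nK = K + D`. -/
def IsFractalCube (n : ℕ) {k : ℕ} (D K : Set (Pt k)) : Prop :=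
  K.Nonempty ∧ IsCompact K ∧ (n : ℝ) • K = K + D

/-- `α ∈ A_k = {−1, 0, 1}^k`. -/
def IsAk {k : ℕ} (α : Pt k) : Prop :=
  ∀ i, α i = -1 ∨ α i = 0 ∨ α i = 1

/-- The unit cube `P = [0,1]^k`. -/
def unitCube (k : ℕ) : Set (Pt k) := {x | ∀ i, 0 ≤ x i ∧ x i ≤ 1}

/-- The face `P_α = P ∩ (P + α)`. -/
def face {k : ℕ} (α : Pt k) : Set (Pt k) :=
  unitCube k ∩ ((fun x => x + α) '' unitCube k)

/-- `α ⊑ β` : `β i = α i` whenever `α i ≠ 0`. -/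
def SqLe {k : ℕ} (α β : Pt k) : Prop := ∀ i, α i ≠ 0 → β i = α i

/-- `α ⊏ β`. -/
def SqLt {k : ℕ} (α β : Pt k) : Prop := SqLe α β ∧ α ≠ β

/-- `F_α = K₁ ∩ (K₂ + α)`. -/
def interF {k : ℕ} (K1 K2 : Set (Pt k)) (α : Pt k) : Set (Pt k) :=
  K1 ∩ ((fun x => x + α) '' K2)

/-- `G_{αβ} = D₁ ∩ (D₂ + nα − β)`. -/
def Gab (n : ℕ) {k : ℕ} (D1 D2 : Set (Pt k)) (α β : Pt k) : Set (Pt k) :=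
  D1 ∩ ((fun x => x + ((n : ℝ) • α - β)) '' D2)

/-- `G_α = G_{αα} = D₁ ∩ (D₂ + (n−1)α)`. -/
def Ga (n : ℕ) {k : ℕ} (D1 D2 : Set (Pt k)) (α : Pt k) : Set (Pt k) :=
  Gab n D1 D2 α α

/-- `β ≻ α` : there is a chain `α = α₀ ⊏ α₁ ⊏ … ⊏ α_p = β` in `A_k` (`p ≥ 1`)
with all `F_{α_j}` nonempty and all `G_{α_{j−1} α_j}` nonempty. -/
def GSucc (n : ℕ) {k : ℕ} (D1 D2 K1 K2 : Set (Pt k)) (β α : Pt k) : Prop :=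
  ∃ p : ℕ, 0 < p ∧ ∃ c : ℕ → Pt k, c 0 = α ∧ c p = β ∧
    (∀ j ≤ p, IsAk (c j)) ∧
    (∀ j < p, SqLt (c j) (c (j + 1))) ∧
    (∀ j ≤ p, (interF K1 K2 (c j)).Nonempty) ∧
    (∀ j < p, (Gab n D1 D2 (c j) (c (j + 1))).Nonempty)

/-- `β ≽ α`. -/
def GSuccEq (n : ℕ) {k : ℕ} (D1 D2 K1 K2 : Set (Pt k)) (β α : Pt k) : Prop :=
  GSucc n D1 D2 K1 K2 β α ∨ β = α

/-- The map `S_d(x) = (x + d)/n`. -/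
def Sdig (n : ℕ) {k : ℕ} (d : Pt k) : Pt k → Pt k :=
  fun x => (n : ℝ)⁻¹ • (x + d)

/-- The `p`-th refinement digit set
`D^(p) = { n^{p−1} d₁ + n^{p−2} d₂ + … + d_p : (d₁, …, d_p) ∈ D^p }`. -/
def refineD (n p : ℕ) {k : ℕ} (D : Set (Pt k)) : Set (Pt k) :=
  {x | ∃ f : Fin p → Pt k, (∀ j, f j ∈ D) ∧
    x = ∑ j : Fin p, ((n : ℝ) ^ (p - 1 - (j : ℕ))) • f j}

/-- A maximal vertex of the structure graph: `F_β ≠ ∅` and no `γ ≻ β`. -/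
def IsMaxVertex (n : ℕ) {k : ℕ} (D1 D2 K1 K2 : Set (Pt k)) (β : Pt k) : Prop :=
  IsAk β ∧ (interF K1 K2 β).Nonempty ∧ ¬∃ γ, IsAk γ ∧ GSucc n D1 D2 K1 K2 γ β

/-- The product `∏ #G_{α_j α_{j+1}}` over consecutive pairs of a chain. -/
def chainProd (n : ℕ) {k : ℕ} (D1 D2 : Set (Pt k)) : List (Pt k) → ℕ
  | [] => 1
  | [_] => 1
  | a :: b :: rest => (Gab n D1 D2 a b).ncard * chainProd n D1 D2 (b :: rest)

/-- A chain `α = α₁ ⊏ α₂ ⊏ … ⊏ α_p = β` inside `Γ_α` ending at a maximal vertex `β`. -/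
def IsMaxChainFrom (n : ℕ) {k : ℕ} (D1 D2 K1 K2 : Set (Pt k)) (α : Pt k)
    (c : List (Pt k)) : Prop :=
  c ≠ [] ∧ c.head? = some α ∧ List.Chain' SqLt c ∧
  (∀ β ∈ c, IsAk β ∧ GSuccEq n D1 D2 K1 K2 β α) ∧
  ∃ β, c.getLast? = some β ∧ IsMaxVertex n D1 D2 K1 K2 β

/-!
The coordinate functional `x ↦ α i * x i` is bounded by `max (α i) 0` on the unit cube `P`,
with equality for all `i` exactly on the face `P_α`. Since `K ⊆ P` and `D ⊆ (n - 1) P`, in a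
decomposition `n x = y + d` the bound for `n x` is the sum of the bounds for `y` and `d`, so
`x ∈ P_α` iff both `y ∈ P_α` and `d ∈ (n - 1) P_α`; this is `n K_α = K_α + D_α`. The set `K_α`
is nonempty because it contains the fixed point `d / (n - 1)` of `S_d` for every `d ∈ D_α`, and
a nonempty compact solution of `n X = X + E` is unique because `X ↦ (X + E) / n` contracts the
Hausdorff distance by the factor `1 / n`.
-/

open Metric

section Attractor

variable {V : Type*} [NormedAddCommGroup V] [NormedSpace ℝ V] {c : ℝ} {D E K X Y : Set V}

theorem infEDist_le_inv_mul_hausdorffEDist (hc : c ≠ 0) (hYc : IsCompact Y) (hYne : Y.Nonempty)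
    (hX : c • X ⊆ X + E) (hY : Y + E ⊆ c • Y) {x : V} (hx : x ∈ X) :
    infEDist x Y ≤ ‖c‖ₑ⁻¹ * hausdorffEDist X Y := by
  obtain ⟨x', hx', e, he, hcx : x' + e = c • x⟩ := hX (smul_mem_smul_set hx)
  obtain ⟨y', hy', hy'x'⟩ := hYc.exists_infEDist_eq_edist hYne x'
  obtain ⟨y, hy, hcy : c • y = y' + e⟩ := hY (add_mem_add hy' he)
  calc infEDist x Y ≤ edist x y := infEDist_le_edist_of_mem hy
    _ = ‖c‖ₑ⁻¹ * edist (c • x) (c • y) := by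
      rw [edist_smul₀, ENNReal.smul_def, smul_eq_mul, ← mul_assoc, ← enorm_eq_nnnorm,
        ENNReal.inv_mul_cancel (by simpa) enorm_ne_top, one_mul]
    _ = ‖c‖ₑ⁻¹ * edist x' y' := by rw [← hcx, hcy, edist_add_right]
    _ ≤ ‖c‖ₑ⁻¹ * hausdorffEDist X Y := by
      rw [← hy'x']
      gcongr
      exact infEDist_le_hausdorffEDist_of_mem hx'

theorem eq_of_smul_eq_add (hc : 1 < ‖c‖)
    (hXc : IsCompact X) (hXne : X.Nonempty) (hX : c • X = X + E)
    (hYc : IsCompact Y) (hYne : Y.Nonempty) (hY : c • Y = Y + E) : X = Y := by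
  have hc0 : c ≠ 0 := norm_pos_iff.mp (one_pos.trans hc)
  have hle : hausdorffEDist X Y ≤ ‖c‖ₑ⁻¹ * hausdorffEDist X Y :=
    hausdorffEDist_le_of_infEDist
      (fun x hx => infEDist_le_inv_mul_hausdorffEDist hc0 hYc hYne hX.subset hY.symm.subset hx)
      (fun y hy => hausdorffEDist_comm (s := X) ▸
        infEDist_le_inv_mul_hausdorffEDist hc0 hXc hXne hY.subset hX.symm.subset hy)
  have hfin : hausdorffEDist X Y ≠ ⊤ :=
    hausdorffEDist_ne_top_of_nonempty_of_bounded hXne hYne hXc.isBounded hYc.isBounded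
  have hc1 : ‖c‖ₑ⁻¹ < 1 := ENNReal.inv_lt_one.2 (ofReal_norm c ▸ ENNReal.one_lt_ofReal.2 hc)
  have h0 : hausdorffEDist X Y = 0 := by
    by_contra h0
    exact hle.not_gt (by simpa using (ENNReal.mul_lt_mul_iff_left h0 hfin).2 hc1)
  exact (hXc.isClosed.hausdorffEDist_zero_iff hYc.isClosed).mp h0

theorem inv_sub_one_smul_mem [CompleteSpace V] (hc : 1 < ‖c‖) (hKc : IsClosed K)
    (hKne : K.Nonempty) (hK : K + D ⊆ c • K) {d : V} (hd : d ∈ D) : (c - 1)⁻¹ • d ∈ K := by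
  set S : V → V := fun x => c⁻¹ • (x + d)
  have hc0 : c ≠ 0 := norm_pos_iff.mp (one_pos.trans hc)
  have hc1 : c - 1 ≠ 0 := fun h => by simp [sub_eq_zero.mp h] at hc
  have hS : ContractingWith ‖c‖₊⁻¹ S := by
    refine ⟨inv_lt_one_of_one_lt₀ hc, LipschitzWith.of_dist_le_mul fun x y => ?_⟩
    simp [S, dist_smul₀, dist_add_right]
  have hfix : Function.IsFixedPt S ((c - 1)⁻¹ • d) := by
    simp only [Function.IsFixedPt, S]
    rw [inv_smul_eq_iff₀ hc0]
    match_scalars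
    field_simp
    ring
  have hmaps : MapsTo S K K := fun x hx => by
    obtain ⟨y, hy, hcy : c • y = x + d⟩ := hK (add_mem_add hx hd)
    rwa [show S x = y by simp only [S, ← hcy, inv_smul_smul₀ hc0]]
  obtain ⟨x, hx⟩ := hKne
  rw [hS.fixedPoint_unique hfix]
  exact hKc.mem_of_tendsto (hS.tendsto_iterate_fixedPoint x)
    (Filter.Eventually.of_forall fun m => hmaps.iterate m hx)

end Attractor

section Faces

variable {V ι : Type*} [AddCommGroup V] [Module ℝ V] {c : ℝ} {Q D K : Set V}

theorem forall_le_of_smul_subset_add [TopologicalSpace V] (hc : 1 < c) (ℓ : V →L[ℝ] ℝ) {M : ℝ}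
    (hKc : IsCompact K) (hD : ∀ d ∈ D, ℓ d ≤ (c - 1) * M) (hK : c • K ⊆ K + D) :
    ∀ x ∈ K, ℓ x ≤ M := by
  rcases K.eq_empty_or_nonempty with rfl | hKne
  · simp
  obtain ⟨x, hx, hmax⟩ := hKc.exists_isMaxOn hKne ℓ.continuous.continuousOn
  obtain ⟨y, hy, d, hd, hyd : y + d = c • x⟩ := hK (smul_mem_smul_set hx)
  have hsum : c * ℓ x = ℓ y + ℓ d := by rw [← smul_eq_mul, ← map_smul, ← hyd, map_add]
  have hxM : ℓ x ≤ M := by nlinarith [show ℓ y ≤ ℓ x from hmax hy, hD d hd]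
  exact fun z hz => (hmax hz).trans hxM

theorem smul_inter_face_eq_add (hc : 1 < c) (ℓ : ι → V →ₗ[ℝ] ℝ) (M : ι → ℝ)
    (hℓ : ∀ i, ∀ x ∈ Q, ℓ i x ≤ M i) (hKQ : K ⊆ Q) (hDQ : D ⊆ (c - 1) • Q)
    (hK : c • K = K + D) :
    c • (K ∩ {x ∈ Q | ∀ i, ℓ i x = M i}) =
      K ∩ {x ∈ Q | ∀ i, ℓ i x = M i} + D ∩ (c - 1) • {x ∈ Q | ∀ i, ℓ i x = M i} := by
  have hc0 : c ≠ 0 := by linarith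
  apply Subset.antisymm
  · rintro _ ⟨x, ⟨hx, -, hxF⟩, rfl⟩
    obtain ⟨y, hy, _, hd, hyd : y + _ = c • x⟩ := hK.subset (smul_mem_smul_set hx)
    obtain ⟨q, hq, rfl⟩ := hDQ hd
    have hsum i : ℓ i y + (c - 1) * ℓ i q = c * M i := by
      simpa [hxF i] using congrArg (ℓ i) hyd
    have hyF i : ℓ i y = M i := by nlinarith [hℓ i y (hKQ hy), hℓ i q hq, hsum i]
    have hqF i : ℓ i q = M i := by nlinarith [hℓ i y (hKQ hy), hℓ i q hq, hsum i]
    exact ⟨y, ⟨hy, hKQ hy, hyF⟩, _, ⟨hd, smul_mem_smul_set ⟨hq, hqF⟩⟩, hyd⟩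
  · rintro _ ⟨y, ⟨hy, -, hyF⟩, _, ⟨hd, q, ⟨-, hqF⟩, rfl⟩, rfl⟩
    obtain ⟨x, hx, hxyd : c • x = y + (c - 1) • q⟩ := hK.symm.subset (add_mem_add hy hd)
    refine ⟨x, ⟨hx, hKQ hx, fun i => mul_left_cancel₀ hc0 ?_⟩, hxyd⟩
    have := congrArg (ℓ i) hxyd
    simp only [map_smul, map_add, smul_eq_mul, hyF i, hqF i] at this
    linarith

theorem smul_image_sub_eq_add (t : V) (hK : c • K = K + D) :
    c • ((fun x => x - t) '' K) = (fun x => x - t) '' K + (fun x => x - (c - 1) • t) '' D := by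
  rw [← image_smul, image_image]
  ext z
  constructor
  · rintro ⟨x, hx, rfl⟩
    obtain ⟨y, hy, d, hd, hyd : y + d = c • x⟩ := hK.subset (smul_mem_smul_set hx)
    exact ⟨y - t, mem_image_of_mem _ hy, d - (c - 1) • t, mem_image_of_mem _ hd,
      by beta_reduce; linear_combination (norm := module) hyd⟩
  · rintro ⟨_, ⟨y, hy, rfl⟩, _, ⟨d, hd, rfl⟩, rfl⟩
    obtain ⟨x, hx, hxyd : c • x = y + d⟩ := hK.symm.subset (add_mem_add hy hd)
    exact ⟨x, hx, by beta_reduce; linear_combination (norm := module) hxyd⟩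

end Faces

theorem mul_le_max_zero {a x : ℝ} (hx : x ∈ Icc (0 : ℝ) 1) : a * x ≤ max a 0 := by
  rcases le_total 0 a with ha | ha
  · exact (mul_le_of_le_one_right ha hx.2).trans (le_max_left a 0)
  · exact (mul_nonpos_of_nonpos_of_nonneg ha hx.1).trans (le_max_right a 0)

theorem mul_eq_max_zero_iff {a x : ℝ} (ha : a = -1 ∨ a = 0 ∨ a = 1) (hx : x ∈ Icc (0 : ℝ) 1) :
    a * x = max a 0 ↔ x - a ∈ Icc (0 : ℝ) 1 := by
  obtain ⟨hx0, hx1⟩ := hx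
  rcases ha with rfl | rfl | rfl <;> norm_num
  · exact ⟨fun h => ⟨by linarith, h.le⟩, fun h => by linarith [h.2]⟩
  · exact ⟨hx0, hx1⟩
  · exact ⟨fun h => ⟨h.ge, by linarith⟩, fun h => by linarith [h.1]⟩

section Cube

variable {k n : ℕ} {α : Pt k} {D K : Set (Pt k)}

theorem unitCube_eq_Icc : unitCube k = Icc 0 1 := by
  ext x
  simp [unitCube, Pi.le_def, forall_and]

theorem isClosed_face (α : Pt k) : IsClosed (face α) := by
  have hP : IsClosed (unitCube k) := unitCube_eq_Icc ▸ isClosed_Icc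
  exact hP.inter ((Homeomorph.addRight α).isClosedMap _ hP)

theorem face_eq_setOf (hα : IsAk α) :
    face α = {x ∈ unitCube k | ∀ i, α i * x i = max (α i) 0} := by
  ext x
  simp only [face, image_add_right, mem_inter_iff, mem_preimage, mem_ofPred_eq]
  refine and_congr_right fun hx => ?_
  exact ⟨fun h i => (mul_eq_max_zero_iff (hα i) (hx i)).2 (h i),
    fun h i => (mul_eq_max_zero_iff (hα i) (hx i)).1 (h i)⟩

theorem sub_max_zero_eq_ite_of_mem_face (hα : IsAk α) {x : Pt k} (hx : x ∈ face α) :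
    x - (fun i => max (α i) 0) = fun i => if α i = 0 then x i else 0 := by
  rw [face_eq_setOf hα] at hx
  funext i
  have hxi := hx.2 i
  rcases hα i with h | h | h <;> simp only [Pi.sub_apply, h] at hxi ⊢ <;> norm_num at hxi ⊢ <;>
    linarith

theorem IsDigit.mem_smul_unitCube (hn : 2 ≤ n) {d : Pt k} (hd : IsDigit n d) :
    d ∈ ((n : ℝ) - 1) • unitCube k := by
  have hn1 : (1 : ℝ) < n := by exact_mod_cast hn
  rw [mem_smul_set_iff_inv_smul_mem₀ (sub_pos.2 hn1).ne']
  intro i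
  obtain ⟨m, hm, hdi⟩ := hd i
  have hmn : (m : ℝ) ≤ n - 1 := by
    have : (m : ℝ) + 1 ≤ n := by exact_mod_cast hm
    linarith
  simp only [Pi.smul_apply, smul_eq_mul, hdi]
  exact ⟨by positivity, inv_mul_le_one_of_le₀ hmn (sub_pos.2 hn1).le⟩

theorem IsFractalCube.subset_unitCube (hn : 2 ≤ n) (hD : D ⊆ ((n : ℝ) - 1) • unitCube k)
    (hK : IsFractalCube n D K) : K ⊆ unitCube k := by
  have hn1 : (1 : ℝ) < n := by exact_mod_cast hn
  obtain ⟨-, hKc, hKeq⟩ := hK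
  intro x hx i
  have hDi : ∀ d ∈ D, 0 ≤ d i ∧ d i ≤ n - 1 := by
    rintro _ hd
    obtain ⟨q, hq, rfl⟩ := hD hd
    obtain ⟨hq0, hq1⟩ := hq i
    simp only [Pi.smul_apply, smul_eq_mul]
    constructor <;> nlinarith
  constructor
  · simpa using forall_le_of_smul_subset_add hn1 (-ContinuousLinearMap.proj i) (M := 0) hKc
      (fun d hd => by simpa using (hDi d hd).1) hKeq.subset x hx
  · simpa using forall_le_of_smul_subset_add hn1 (ContinuousLinearMap.proj i) (M := 1) hKc
      (fun d hd => by simpa using (hDi d hd).2) hKeq.subset x hx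

theorem IsFractalCube.unique {E X Y : Set (Pt k)} (hn : 2 ≤ n) (hX : IsFractalCube n E X)
    (hY : IsFractalCube n E Y) : X = Y := by
  have hn1 : 1 < ‖(n : ℝ)‖ := by simpa using (show (1 : ℝ) < n by exact_mod_cast hn)
  exact eq_of_smul_eq_add hn1 hX.2.1 hX.1 hX.2.2 hY.2.1 hY.1 hY.2.2

theorem IsFractalCube.image_sub (hK : IsFractalCube n D K) (t : Pt k) :
    IsFractalCube n ((fun x => x - ((n : ℝ) - 1) • t) '' D) ((fun x => x - t) '' K) :=
  ⟨hK.1.image _, hK.2.1.image (continuous_sub_right t), smul_image_sub_eq_add t hK.2.2⟩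

theorem IsFractalCube.inter_face (hn : 2 ≤ n) (hD : ∀ d ∈ D, IsDigit n d)
    (hK : IsFractalCube n D K) (hα : IsAk α) (hne : (D ∩ ((n : ℝ) - 1) • face α).Nonempty) :
    IsFractalCube n (D ∩ ((n : ℝ) - 1) • face α) (K ∩ face α) := by
  have hn1 : (1 : ℝ) < n := by exact_mod_cast hn
  have hDP : D ⊆ ((n : ℝ) - 1) • unitCube k := fun d hd => (hD d hd).mem_smul_unitCube hn
  have hKP := hK.subset_unitCube hn hDP
  obtain ⟨hKne, hKc, hKeq⟩ := hK
  refine ⟨?_, hKc.inter_right (isClosed_face α), ?_⟩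
  · obtain ⟨d, hd, hdF⟩ := hne
    refine ⟨_, inv_sub_one_smul_mem (by simpa using hn1) hKc.isClosed hKne hKeq.symm.subset hd,
      (mem_smul_set_iff_inv_smul_mem₀ (sub_pos.2 hn1).ne' _ _).1 hdF⟩
  · rw [face_eq_setOf hα]
    have := smul_inter_face_eq_add (Q := unitCube k) hn1 (fun i => α i • LinearMap.proj i)
      (fun i => max (α i) 0) (fun i x hx => mul_le_max_zero (hx i)) hKP hDP hKeq
    simpa only [LinearMap.smul_apply, LinearMap.proj_apply, smul_eq_mul] using this

end Cube

theorem face_of_fractalCube_general {k n : ℕ} (hn : 2 ≤ n)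
    (D K : Set (Pt k)) (hD : IsDigitSet n D) (hK : IsFractalCube n D K)
    (α : Pt k) (hα : IsAk α)
    (hne : (D ∩ ((n : ℝ) - 1) • face α).Nonempty)
    (α0 : Pt k) (hα0 : α0 = fun i => max (α i) 0) :
    IsFractalCube n (D ∩ ((n : ℝ) - 1) • face α) (K ∩ face α) ∧
    (∀ X : Set (Pt k), IsFractalCube n (D ∩ ((n : ℝ) - 1) • face α) X →
      X = K ∩ face α) ∧
    IsFractalCube n ((fun x => x - ((n : ℝ) - 1) • α0) '' (D ∩ ((n : ℝ) - 1) • face α))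
      ((fun x => x - α0) '' (K ∩ face α)) ∧
    (∀ X : Set (Pt k),
      IsFractalCube n ((fun x => x - ((n : ℝ) - 1) • α0) '' (D ∩ ((n : ℝ) - 1) • face α)) X →
      X = (fun x => x - α0) '' (K ∩ face α)) ∧
    (fun x => x - α0) '' (K ∩ face α)
      = (fun (x : Pt k) i => if α i = 0 then x i else 0) '' (K ∩ face α) := by
  have hKα := hK.inter_face hn hD.2 hα hne
  have hKα0 := hKα.image_sub α0
  subst hα0
  exact ⟨hKα, fun X hX => hX.unique hn hKα, hKα0, fun X hX => hX.unique hn hKα0,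
    image_congr fun x hx => sub_max_zero_eq_ite_of_mem_face hα hx.2⟩

/-- `K_α = K ∩ P_α` is the fractal cube with digit set
`D_α = D ∩ (n−1)P_α`; moreover `K_α − α⁰` is the fractal cube with digit set
`D_α − (n−1)α⁰` and equals the orthogonal projection of `K_α` onto
`E_α = span{e_i : α_i = 0}`. -/
theorem face_of_fractalCube {k n : ℕ} (hk : 1 ≤ k) (hn : 2 ≤ n)
    (D K : Set (Pt k)) (hD : IsDigitSet n D) (hK : IsFractalCube n D K)
    (α : Pt k) (hα : IsAk α)
    (hne : (D ∩ ((n : ℝ) - 1) • face α).Nonempty)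
    (α0 : Pt k) (hα0 : α0 = fun i => max (α i) 0) :
    IsFractalCube n (D ∩ ((n : ℝ) - 1) • face α) (K ∩ face α) ∧
    (∀ X : Set (Pt k), IsFractalCube n (D ∩ ((n : ℝ) - 1) • face α) X →
      X = K ∩ face α) ∧
    IsFractalCube n ((fun x => x - ((n : ℝ) - 1) • α0) '' (D ∩ ((n : ℝ) - 1) • face α))
      ((fun x => x - α0) '' (K ∩ face α)) ∧
    (∀ X : Set (Pt k),
      IsFractalCube n ((fun x => x - ((n : ℝ) - 1) • α0) '' (D ∩ ((n : ℝ) - 1) • face α)) X →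
      X = (fun x => x - α0) '' (K ∩ face α)) ∧
    (fun x => x - α0) '' (K ∩ face α)
      = (fun (x : Pt k) i => if α i = 0 then x i else 0) '' (K ∩ face α) :=
  face_of_fractalCube_general hn D K hD hK α hα hne α0 hα0
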